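/- For 0 < λ < 4 with θ = π - arccos((λ-2)/2), let R = Q_{n-1}(λ)⁻¹ and define ψ(w̄, λ) := w_0 - Σ_{i=1}^{n-1} w_i (R_{i,1} + R_{i,n-1}). Then ψ(w̄, λ) = (1/cos(nθ/2)) Σ_{i=0}^{n-1} w_i cos((n/2 - i)θ), provided cos(nθ/2) ≠ 0. -/

import Mathlib

/-!
Since `λ - 2 = -2 cos θ`, the sequence `x_j = -cos ((n/2 - (j+1)) θ) / cos (nθ/2)`, `j ∈ ℤ`,
satisfies the recurrence `x_{j-1} + (λ-2) x_j + x_{j+1} = 0` of the rows of `Q_{n-1}(λ)`, and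
its values just outside the index range are `x_{-1} = x_{n-1} = -1`. Hence
`Q_{n-1}(λ) x = e_first + e_last`, i.e. `x_i = R_{i,first} + R_{i,last}`, and substituting this
into `ψ` gives the formula.
-/

open Real Matrix

/-- `Q_k(λ)`: `k×k` symmetric tridiagonal matrix with diagonal `λ-2` and off-diagonal `1`. -/
def Qmat (k : ℕ) (lam : ℝ) : Matrix (Fin k) (Fin k) ℝ :=
  fun i j => if i = j then lam - 2
    else if i.val + 1 = j.val ∨ j.val + 1 = i.val then 1 else 0

theorem Qmat_apply {k : ℕ} (lam : ℝ) (i j : Fin k) :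
    Qmat k lam i j = (if (j : ℕ) = i then lam - 2 else 0) + (if (j : ℕ) = i + 1 then 1 else 0)
      + (if (j : ℕ) + 1 = i then 1 else 0) := by
  simp only [Qmat, Fin.ext_iff]
  split_ifs <;> first | ring1 | (exfalso; omega)

theorem Qmat_mulVec_apply {k : ℕ} (lam : ℝ) (x : ℤ → ℝ) (i : Fin k) :
    (Qmat k lam *ᵥ fun j => x j) i = (lam - 2) * x i + (if (i : ℕ) + 1 < k then x (i + 1) else 0)
      + (if 0 < (i : ℕ) then x (i - 1) else 0) := by
  have hprev : (∑ j ∈ Finset.range k, if j + 1 = (i : ℕ) then x j else 0)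
      = if 0 < (i : ℕ) then x (i - 1) else 0 := by
    split_ifs with hi
    · rw [Finset.sum_eq_single ((i : ℕ) - 1) (fun j _ hj => if_neg (by omega))
        (fun h => absurd (Finset.mem_range.2 (by omega)) h), if_pos (by omega), Nat.cast_pred hi]
    · exact Finset.sum_eq_zero fun j _ => if_neg (by omega)
  simp only [mulVec, dotProduct, Qmat_apply, add_mul, ite_mul, one_mul, zero_mul,
    Finset.sum_add_distrib,
    Fin.sum_univ_eq_sum_range (fun j => if j = (i : ℕ) then (lam - 2) * x j else 0),
    Fin.sum_univ_eq_sum_range (fun j => if j = (i : ℕ) + 1 then x j else 0),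
    Fin.sum_univ_eq_sum_range (fun j => if j + 1 = (i : ℕ) then x j else 0),
    Finset.sum_ite_eq', Finset.mem_range, hprev, if_pos i.isLt, Nat.cast_succ]

theorem Qmat_mulVec_of_recurrence {k : ℕ} (lam : ℝ) (x : ℤ → ℝ)
    (hx : ∀ j, x (j - 1) + (lam - 2) * x j + x (j + 1) = 0) (i : Fin k) :
    (Qmat k lam *ᵥ fun j => x j) i
      = -(if (i : ℕ) = 0 then x (-1) else 0) - (if (i : ℕ) + 1 = k then x k else 0) := by
  have hi := hx i
  rw [Qmat_mulVec_apply]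
  by_cases hfirst : (i : ℕ) = 0 <;> by_cases hlast : (i : ℕ) + 1 = k
  · rw [show ((i : ℕ) : ℤ) - 1 = -1 by omega, show ((i : ℕ) : ℤ) + 1 = k by omega] at hi
    rw [if_neg (by omega), if_neg (by omega), if_pos hfirst, if_pos hlast]
    linarith
  · rw [show ((i : ℕ) : ℤ) - 1 = -1 by omega] at hi
    rw [if_pos (by omega), if_neg (by omega), if_pos hfirst, if_neg hlast]
    linarith
  · rw [show ((i : ℕ) : ℤ) + 1 = k by omega] at hi
    rw [if_neg (by omega), if_pos (by omega), if_neg hfirst, if_pos hlast]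
    linarith
  · rw [if_pos (by omega), if_pos (by omega), if_neg hfirst, if_neg hlast]
    linarith

theorem Qmat_inv_apply_add_apply {k : ℕ} {lam θ : ℝ} (hlam : lam - 2 = -2 * cos θ)
    (hU : IsUnit (Qmat k lam).det) (hc : cos ((k + 1) * θ / 2) ≠ 0) (i j₀ j₁ : Fin k)
    (h₀ : (j₀ : ℕ) = 0) (h₁ : (j₁ : ℕ) + 1 = k) :
    (Qmat k lam)⁻¹ i j₀ + (Qmat k lam)⁻¹ i j₁
      = -cos (((k + 1) / 2 - (i + 1)) * θ) / cos ((k + 1) * θ / 2) := by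
  set x : ℤ → ℝ := fun j => -cos (((k + 1) / 2 - (j + 1)) * θ) / cos ((k + 1) * θ / 2)
  have hrec : ∀ j, x (j - 1) + (lam - 2) * x j + x (j + 1) = 0 := by
    intro j
    set A := ((k + 1) / 2 - (j + 1)) * θ
    simp only [x, hlam]
    rw [show ((k + 1) / 2 - (((j - 1 : ℤ) : ℝ) + 1)) * θ = A + θ by push_cast; ring,
      show ((k + 1) / 2 - (((j + 1 : ℤ) : ℝ) + 1)) * θ = A - θ by push_cast; ring, cos_add, cos_sub]
    ring
  have hfirst : x (-1) = -1 := by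
    simp only [x]
    rw [show ((k + 1) / 2 - (((-1 : ℤ) : ℝ) + 1)) * θ = (k + 1) * θ / 2 by push_cast; ring]
    field_simp
  have hlast : x k = -1 := by
    simp only [x]
    rw [show ((k + 1) / 2 - (((k : ℤ) : ℝ) + 1)) * θ = -((k + 1) * θ / 2) by push_cast; ring,
      cos_neg]
    field_simp
  have hx : Qmat k lam *ᵥ (fun j => x j) = Pi.single j₀ 1 + Pi.single j₁ 1 := by
    funext i
    have e₀ : i = j₀ ↔ (i : ℕ) = 0 := by rw [Fin.ext_iff, h₀]
    have e₁ : i = j₁ ↔ (i : ℕ) + 1 = k := by rw [Fin.ext_iff]; omega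
    rw [Qmat_mulVec_of_recurrence lam x hrec, Pi.add_apply, Pi.single_apply, Pi.single_apply,
      hfirst, hlast]
    simp only [e₀, e₁]
    split_ifs <;> ring
  have hinv : (Qmat k lam)⁻¹ *ᵥ (Pi.single j₀ 1 + Pi.single j₁ 1) = fun j : Fin k => x j := by
    rw [← hx, mulVec_mulVec, nonsing_inv_mul _ hU, one_mulVec]
  have := congrFun hinv i
  simp only [mulVec_add, mulVec_single_one, Pi.add_apply, col_apply] at this
  rw [this]
  simp only [x, Int.cast_natCast]

theorem stmt18 (n : ℕ) (hn : 3 ≤ n) (lam : ℝ) (h0 : 0 < lam) (h4 : lam < 4)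
    (w : ℕ → ℝ)
    (θ : ℝ) (hθ : θ = Real.pi - Real.arccos ((lam - 2) / 2))
    (hcos : Real.cos (n * θ / 2) ≠ 0)
    (hU : IsUnit (Qmat (n - 1) lam).det) :
    w 0 - ∑ i ∈ Finset.range (n - 1),
        w (i + 1) * ((Qmat (n - 1) lam)⁻¹ ⟨i % (n - 1), Nat.mod_lt _ (by omega)⟩ ⟨0, by omega⟩ +
          (Qmat (n - 1) lam)⁻¹ ⟨i % (n - 1), Nat.mod_lt _ (by omega)⟩ ⟨n - 2, by omega⟩) =
    (1 / Real.cos (n * θ / 2)) *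
      ∑ i ∈ Finset.range n, w i * Real.cos (((n : ℝ) / 2 - (i : ℝ)) * θ) := by
  have hlam : lam - 2 = -2 * cos θ := by
    rw [hθ, cos_pi_sub, cos_arccos (by linarith) (by linarith)]
    ring
  have hn₁ : ((n - 1 : ℕ) : ℝ) + 1 = n := by
    rw [Nat.cast_sub (by omega)]
    ring
  have hcol : ∀ i ∈ Finset.range (n - 1),
      (Qmat (n - 1) lam)⁻¹ ⟨i % (n - 1), Nat.mod_lt _ (by omega)⟩ ⟨0, by omega⟩ +
        (Qmat (n - 1) lam)⁻¹ ⟨i % (n - 1), Nat.mod_lt _ (by omega)⟩ ⟨n - 2, by omega⟩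
      = -cos ((n / 2 - (i + 1)) * θ) / cos (n * θ / 2) := by
    intro i hi
    rw [Qmat_inv_apply_add_apply hlam hU (by rwa [hn₁]) _ _ _ rfl (by dsimp only; omega), hn₁]
    simp only [Nat.mod_eq_of_lt (Finset.mem_range.1 hi)]
  rw [Finset.sum_congr rfl fun i hi => by rw [hcol i hi],
    show Finset.range n = Finset.range (n - 1 + 1) by congr 1; omega, Finset.sum_range_succ',
    mul_add, Finset.mul_sum, sub_eq_add_neg, ← Finset.sum_neg_distrib, add_comm]
  congr 1
  · refine Finset.sum_congr rfl fun i _ => ?_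
    push_cast
    ring
  · rw [Nat.cast_zero, sub_zero, div_mul_eq_mul_div]
    field_simp
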